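/- arXiv:2111.15067 — 3 statements merged into one kernel-verified Lean document; each statement's English description precedes it below -/
import Mathlib

section
/- Let N ≥ 2 be an integer, let a, b ∈ ℝ satisfy (N/2 − a)² ≥ N + 1 and a − b + 1 > 0, let γ ∈ ℝ and β > 0, and define U(x) = γ |x|^{−N/2 + a + √((1 − N/2 + a)² + N − 1)} · e^{−β |x|^{a−b+1}/(a−b+1)} · x for x ≠ 0. Then U is curl-free, U ∈ X_{a,b}(ℝ^N), and equality holds: (∫_{ℝ^N} |∇U|²/|x|^{2a} dx) · (∫_{ℝ^N} |U|²/|x|^{2b} dx) = C(N,a,b)² · (∫_{ℝ^N} |U|²/|x|^{a+b+1} dx)², where C(N,a,b) = √((1 − N/2 + a)² + N − 1) + (a − b + 1)/2. -/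
noncomputable section
open MeasureTheory Real Filter

/-- `Euc N` is Euclidean space `ℝ^N`. -/
abbrev Euc (N : ℕ) := EuclideanSpace ℝ (Fin N)

/-- `|∇U|² = Σ_{j,k} |∂_j U_k|²`, the squared Frobenius norm of the Jacobian of the
vector field `U`.  (For `U = ∇u` this is the squared Frobenius norm `|D²u|²` of the Hessian.) -/
def gradNormSq {N : ℕ} (U : Euc N → Euc N) (x : Euc N) : ℝ :=
  ∑ j : Fin N, ∑ k : Fin N, (fderiv ℝ U x (EuclideanSpace.single j 1) k) ^ 2

/-- `U` is curl-free on `ℝ^N ∖ {0}`: `∂_j U_k = ∂_k U_j` for all `j, k`. -/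
def IsCurlFree {N : ℕ} (U : Euc N → Euc N) : Prop :=
  ∀ x : Euc N, x ≠ 0 → ∀ j k : Fin N,
    fderiv ℝ U x (EuclideanSpace.single j 1) k = fderiv ℝ U x (EuclideanSpace.single k 1) j

/-- Membership in the class `X_{a,b}(ℝ^N)`: smoothness away from the origin, finiteness of
the three weighted energies, and the decay conditions at the origin and at infinity. -/
structure MemX (N : ℕ) (a b : ℝ) (U : Euc N → Euc N) : Prop where
  smooth : ContDiffOn ℝ (⊤ : ℕ∞) U {(0 : Euc N)}ᶜ
  int_grad : Integrable (fun x : Euc N => gradNormSq U x / ‖x‖ ^ (2 * a))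
  int_b : Integrable (fun x : Euc N => ‖U x‖ ^ 2 / ‖x‖ ^ (2 * b))
  int_ab : Integrable (fun x : Euc N => ‖U x‖ ^ 2 / ‖x‖ ^ (a + b + 1))
  decay_a_zero : Tendsto (fun x : Euc N => ‖x‖ ^ ((N : ℝ) / 2 - 1 - a) • U x)
      (nhdsWithin 0 {(0 : Euc N)}ᶜ) (nhds 0)
  decay_a_infty : Tendsto (fun x : Euc N => ‖x‖ ^ ((N : ℝ) / 2 - 1 - a) • U x)
      (comap (fun x : Euc N => ‖x‖) atTop) (nhds 0)
  decay_b_zero : Tendsto (fun x : Euc N => ‖x‖ ^ ((N : ℝ) / 2 - b) • U x)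
      (nhdsWithin 0 {(0 : Euc N)}ᶜ) (nhds 0)
  decay_b_infty : Tendsto (fun x : Euc N => ‖x‖ ^ ((N : ℝ) / 2 - b) • U x)
      (comap (fun x : Euc N => ‖x‖) atTop) (nhds 0)

/-- The Laplacian `Δu = Σ_i ∂_i ∂_i u` of a scalar field. -/
def lap {N : ℕ} (u : Euc N → ℝ) (x : Euc N) : ℝ :=
  ∑ i : Fin N,
    fderiv ℝ (fun y => fderiv ℝ u y (EuclideanSpace.single i 1)) x (EuclideanSpace.single i 1)

/-- The radial derivative `(x/|x|)·∇u`. -/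
def radDeriv {N : ℕ} (u : Euc N → ℝ) (x : Euc N) : ℝ := ‖x‖⁻¹ * fderiv ℝ u x x

/-- Membership in the class `Y_a(ℝ^N)`: smoothness away from the origin, finiteness of the
three energies, and the decay conditions at the origin and at infinity. -/
structure MemY (N : ℕ) (a : ℝ) (u : Euc N → ℝ) : Prop where
  smooth : ContDiffOn ℝ (⊤ : ℕ∞) u {(0 : Euc N)}ᶜ
  int_lap : Integrable (fun x : Euc N => (lap u x) ^ 2 / ‖x‖ ^ (2 * a))
  int_rad : Integrable (fun x : Euc N => ‖x‖ ^ (2 * a + 2) * (radDeriv u x) ^ 2)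
  int_grad : Integrable (fun x : Euc N => ‖gradient u x‖ ^ 2)
  decay_u_zero : Tendsto (fun x : Euc N => ‖x‖ ^ ((N : ℝ) - 1) * (u x) ^ 2)
      (nhdsWithin 0 {(0 : Euc N)}ᶜ) (nhds 0)
  decay_u_infty : Tendsto (fun x : Euc N => ‖x‖ ^ ((N : ℝ) - 1) * (u x) ^ 2)
      (comap (fun x : Euc N => ‖x‖) atTop) (nhds 0)
  decay_rad_zero : Tendsto (fun x : Euc N => ‖x‖ ^ (N : ℝ) * (radDeriv u x) ^ 2)
      (nhdsWithin 0 {(0 : Euc N)}ᶜ) (nhds 0)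
  decay_rad_infty : Tendsto (fun x : Euc N => ‖x‖ ^ (N : ℝ) * (radDeriv u x) ^ 2)
      (comap (fun x : Euc N => ‖x‖) atTop) (nhds 0)
  decay_ua_zero : Tendsto (fun x : Euc N => ‖x‖ ^ (2 * a + (N : ℝ)) * (u x) ^ 2)
      (nhdsWithin 0 {(0 : Euc N)}ᶜ) (nhds 0)
  decay_ua_infty : Tendsto (fun x : Euc N => ‖x‖ ^ (2 * a + (N : ℝ)) * (u x) ^ 2)
      (comap (fun x : Euc N => ‖x‖) atTop) (nhds 0)

/-! ### Auxiliary lemmas -/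

section AuxRadialIntegrability
open Metric
variable {E : Type*} [NormedAddCommGroup E] [NormedSpace ℝ E] [MeasurableSpace E]
  [Nontrivial E] (μ : Measure E) [FiniteDimensional ℝ E] [BorelSpace E] [μ.IsAddHaarMeasure]

theorem integrable_fun_norm_addHaar_of {f : ℝ → ℝ} (hfm : Measurable f)
    (hf : IntegrableOn (fun r => r ^ (Module.finrank ℝ E - 1) * f r) (Set.Ioi (0:ℝ))) :
    Integrable (fun x : E => f ‖x‖) μ := by
  set n := Module.finrank ℝ E - 1 with hn
  have h1 : Integrable (fun r : Set.Ioi (0:ℝ) => f r) (Measure.volumeIoiPow n) := by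
    rw [Measure.volumeIoiPow, integrable_withDensity_iff (by fun_prop) (by
      filter_upwards with r; exact ENNReal.ofReal_lt_top)]
    have : Integrable ((fun r : ℝ => f r * r ^ n) ∘ (Subtype.val : Set.Ioi (0:ℝ) → ℝ))
        (Measure.comap Subtype.val volume) := by
      rw [← (MeasurableEmbedding.subtype_coe measurableSet_Ioi).integrable_map_iff,
        map_comap_subtype_coe measurableSet_Ioi]
      exact hf.congr_fun (fun r _ => by ring) measurableSet_Ioi
    refine this.congr (by
      filter_upwards with r
      simp [Function.comp, ENNReal.toReal_ofReal (pow_nonneg r.2.out.le n), mul_comm])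
  have h2 : Integrable (fun p : sphere (0:E) 1 × Set.Ioi (0:ℝ) => f p.2)
      (μ.toSphere.prod (Measure.volumeIoiPow n)) := by
    have hm : AEStronglyMeasurable (fun p : sphere (0:E) 1 × Set.Ioi (0:ℝ) => f p.2)
        (μ.toSphere.prod (Measure.volumeIoiPow n)) :=
      (hfm.comp (measurable_subtype_coe.comp measurable_snd)).aestronglyMeasurable
    rw [integrable_prod_iff' hm]
    refine ⟨by filter_upwards with y using integrable_const _, ?_⟩
    simpa [integral_const, Pi.smul_def, measureReal_def] using (h1.norm.smul ((μ.toSphere Set.univ).toReal))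
  have h3 : Integrable (fun x : ({(0:E)}ᶜ : Set E) => f ‖x.1‖) (Measure.comap Subtype.val μ) :=
    by simpa [Function.comp_def, homeomorphUnitSphereProd] using
    (μ.measurePreserving_homeomorphUnitSphereProd.integrable_comp_emb
      (Homeomorph.measurableEmbedding _)
      (g := fun p : sphere (0:E) 1 × Set.Ioi (0:ℝ) => f p.2)).2 h2
  have h4 : Integrable ((fun x : E => f ‖x‖) ∘ (Subtype.val : ({(0:E)}ᶜ : Set E) → E))
      (Measure.comap Subtype.val μ) := h3
  rw [← (MeasurableEmbedding.subtype_coe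
        (measurableSet_singleton (0:E)).compl).integrable_map_iff,
    map_comap_subtype_coe (measurableSet_singleton (0:E)).compl,
    restrict_compl_singleton] at h4
  exact h4

end AuxRadialIntegrability

section Aux1D
open Set
variable {p b q : ℝ}

theorem integrableOn_rpow_mul_exp_neg_mul_rpow' (hq : -1 < q) (hp : 0 < p) (hb : 0 < b) :
    IntegrableOn (fun x : ℝ => x ^ q * exp (-b * x ^ p)) (Ioi 0) := by
  have h0 : IntegrableOn (fun y : ℝ => y ^ ((q + 1) / p - 1) * exp (-b * y)) (Ioi 0) := by
    have h := integrableOn_rpow_mul_exp_neg_mul_rpow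
      (show -1 < (q + 1) / p - 1 by
        have : 0 < (q + 1) / p := div_pos (by linarith) hp
        linarith) zero_lt_one hb
    simpa [rpow_one] using h
  have h := (integrableOn_Ioi_comp_rpow_iff'
    (fun y : ℝ => y ^ ((q + 1) / p - 1) * exp (-b * y)) (ne_of_gt hp)).2 h0
  refine h.congr_fun (fun x hx => ?_) measurableSet_Ioi
  have hx0 : (0:ℝ) < x := hx
  dsimp only
  rw [smul_eq_mul, ← Real.rpow_mul hx0.le, ← mul_assoc, ← Real.rpow_add hx0]
  rw [show p - 1 + p * ((q + 1) / p - 1) = q by field_simp; ring]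

end Aux1D

def gfun (γ α β p : ℝ) : ℝ → ℝ := fun r => γ * r ^ α * exp (-(β / p) * r ^ p)

def dgfun (γ α β p : ℝ) : ℝ → ℝ := fun r => gfun γ α β p r * ((α - β * r ^ p) / r)

section Aux1Db
open Set
variable {γ α β p : ℝ}

theorem hasDerivAt_gfun (hp : 0 < p) {r : ℝ} (hr : 0 < r) :
    HasDerivAt (gfun γ α β p) (dgfun γ α β p r) r := by
  have h1 : HasDerivAt (fun t : ℝ => t ^ α) (α * r ^ (α - 1)) r :=
    Real.hasDerivAt_rpow_const (Or.inl hr.ne')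
  have h2 : HasDerivAt (fun t : ℝ => -(β / p) * t ^ p) (-(β / p) * (p * r ^ (p - 1))) r :=
    (Real.hasDerivAt_rpow_const (Or.inl hr.ne')).const_mul _
  have h4 := (h1.const_mul γ).mul h2.exp
  refine h4.congr_deriv ?_
  unfold dgfun gfun
  rw [Real.rpow_sub hr, Real.rpow_sub hr, Real.rpow_one]
  field_simp
  ring

theorem gsq_eq {s : ℝ} {r : ℝ} (hr : 0 < r) :
    r ^ s * (gfun γ α β p r) ^ 2 = γ ^ 2 * (r ^ (2 * α + s) * exp (-(2 * (β / p)) * r ^ p)) := by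
  unfold gfun
  rw [mul_pow, mul_pow, ← Real.exp_nat_mul, ← Real.rpow_natCast (r ^ α) 2,
    ← Real.rpow_mul hr.le, Real.rpow_add hr]
  push_cast
  ring_nf

theorem integrableOn_gsq (hp : 0 < p) (hβ : 0 < β) {s : ℝ} (hs : -1 < 2 * α + s) :
    IntegrableOn (fun r : ℝ => r ^ s * (gfun γ α β p r) ^ 2) (Ioi 0) := by
  have h := (integrableOn_rpow_mul_exp_neg_mul_rpow' hs hp
    (by positivity : (0:ℝ) < 2 * (β / p))).const_mul (γ ^ 2)
  exact IntegrableOn.congr_fun h (fun r hr => (gsq_eq hr).symm) measurableSet_Ioi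

theorem integral_gsq (hp : 0 < p) (hβ : 0 < β) {s : ℝ} (hs : -1 < 2 * α + s) :
    ∫ r in Ioi (0:ℝ), r ^ s * (gfun γ α β p r) ^ 2 =
      γ ^ 2 * ((2 * (β / p)) ^ (-(2 * α + s + 1) / p) * (1 / p) *
        Real.Gamma ((2 * α + s + 1) / p)) := by
  rw [setIntegral_congr_fun measurableSet_Ioi (fun r hr => gsq_eq (mem_Ioi.1 hr)),
    integral_const_mul, integral_rpow_mul_exp_neg_mul_rpow hp hs (by positivity)]

theorem tendsto_rpow_exp_zero (hp : 0 < p) {b t : ℝ} (hb : 0 < b) (ht : 0 < t) :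
    Tendsto (fun r : ℝ => r ^ t * exp (-b * r ^ p)) (nhdsWithin 0 (Ioi 0)) (nhds 0) := by
  have h1 : Tendsto (fun r : ℝ => r ^ t) (nhds 0) (nhds 0) := by
    have := (Real.continuousAt_rpow_const 0 t (Or.inr ht.le)).tendsto
    simpa [Real.zero_rpow ht.ne'] using this
  have h2 : Tendsto (fun r : ℝ => exp (-b * r ^ p)) (nhds 0) (nhds 1) := by
    have hc : ContinuousAt (fun r : ℝ => exp (-b * r ^ p)) 0 := by
      have := (Real.continuousAt_rpow_const 0 p (Or.inr hp.le))
      exact Real.continuous_exp.continuousAt.comp (continuousAt_const.mul this)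
    have := hc.tendsto
    simpa [Real.zero_rpow hp.ne'] using this
  have h3 := h1.mul h2
  rw [zero_mul] at h3
  exact h3.mono_left nhdsWithin_le_nhds

theorem tendsto_rpow_exp_atTop (hp : 0 < p) {b : ℝ} (t : ℝ) (hb : 0 < b) :
    Tendsto (fun r : ℝ => r ^ t * exp (-b * r ^ p)) atTop (nhds 0) := by
  have h := (tendsto_rpow_mul_exp_neg_mul_atTop_nhds_zero (t / p) b hb).comp
    (tendsto_rpow_atTop hp)
  refine h.congr' ?_
  filter_upwards [eventually_gt_atTop (0:ℝ)] with r hr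
  simp only [Function.comp]
  rw [← Real.rpow_mul hr.le]
  congr 2
  field_simp

end Aux1Db

section AuxFDeriv
variable {N : ℕ} {γ α β p : ℝ}

theorem hasFDerivAt_norm' {x : Euc N} (hx : x ≠ 0) :
    HasFDerivAt (fun y : Euc N => ‖y‖) (‖x‖⁻¹ • innerSL ℝ x) x := by
  have hn2 : HasFDerivAt (fun y : Euc N => ‖y‖ ^ 2) (2 • innerSL ℝ x) x :=
    (hasStrictFDerivAt_norm_sq x).hasFDerivAt
  have h := hn2.sqrt (by simpa using norm_pos_iff.2 hx |>.ne')
  have hfun : (fun y : Euc N => Real.sqrt (‖y‖ ^ 2)) = fun y : Euc N => ‖y‖ := by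
    funext y; rw [Real.sqrt_sq (norm_nonneg y)]
  rw [hfun] at h
  refine h.congr_fderiv ?_
  rw [Real.sqrt_sq (norm_nonneg x)]
  ext v
  simp only [ContinuousLinearMap.coe_smul', Pi.smul_apply, smul_eq_mul,
    ContinuousLinearMap.smul_apply]
  have : ‖x‖ ≠ 0 := norm_ne_zero_iff.2 hx
  field_simp
  ring

theorem hasFDerivAt_radial (hp : 0 < p) {x : Euc N} (hx : x ≠ 0) :
    HasFDerivAt (fun y : Euc N => gfun γ α β p ‖y‖ • y)
      ((gfun γ α β p ‖x‖) • ContinuousLinearMap.id ℝ (Euc N)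
        + ((dgfun γ α β p ‖x‖ * ‖x‖⁻¹) • innerSL ℝ x).smulRight x) x := by
  have hnorm := hasFDerivAt_norm' hx
  have hg := hasDerivAt_gfun (γ := γ) (α := α) (β := β) hp (norm_pos_iff.mpr hx)
  have hcomp := hg.comp_hasFDerivAt x hnorm
  have h := hcomp.smul (hasFDerivAt_id x)
  refine h.congr_fderiv ?_
  rw [smul_smul]
  rfl

theorem radial_deriv_entry (hp : 0 < p) {x : Euc N} (hx : x ≠ 0) (j k : Fin N) :
    ((gfun γ α β p ‖x‖) • ContinuousLinearMap.id ℝ (Euc N)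
        + ((dgfun γ α β p ‖x‖ * ‖x‖⁻¹) • innerSL ℝ x).smulRight x)
      (EuclideanSpace.single j 1) k =
      (dgfun γ α β p ‖x‖ * ‖x‖⁻¹) * x j * x k
        + gfun γ α β p ‖x‖ * (if k = j then 1 else 0) := by
  simp only [ContinuousLinearMap.add_apply, ContinuousLinearMap.smul_apply,
    ContinuousLinearMap.coe_id', id_eq, ContinuousLinearMap.smulRight_apply,
    innerSL_apply_apply, PiLp.add_apply, PiLp.smul_apply, smul_eq_mul]
  rw [EuclideanSpace.inner_single_right]
  simp [EuclideanSpace.single_apply, mul_comm, mul_assoc, mul_left_comm]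
  ring

theorem sum_entry_sq (x : Euc N) (A B : ℝ) :
    ∑ j : Fin N, ∑ k : Fin N, (A * x j * x k + B * (if k = j then (1:ℝ) else 0)) ^ 2
      = A ^ 2 * (∑ i, x i ^ 2) ^ 2 + 2 * A * B * (∑ i, x i ^ 2) + N * B ^ 2 := by
  have hinner : ∀ j : Fin N,
      ∑ k : Fin N, (A * x j * x k + B * (if k = j then (1:ℝ) else 0)) ^ 2
        = A ^ 2 * (x j) ^ 2 * (∑ i, x i ^ 2) + (2 * A * B * (x j) ^ 2 + B ^ 2) := by
    intro j
    have hterm : ∀ k : Fin N, (A * x j * x k + B * (if k = j then (1:ℝ) else 0)) ^ 2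
        = A ^ 2 * (x j) ^ 2 * (x k) ^ 2
          + (if k = j then (2 * A * B * (x j) ^ 2 + B ^ 2) else 0) := by
      intro k
      by_cases h : k = j
      · subst h; simp; ring
      · simp [h]; ring
    rw [Finset.sum_congr rfl (fun k _ => hterm k), Finset.sum_add_distrib,
      Finset.sum_ite_eq' Finset.univ j (fun _ => 2 * A * B * (x j) ^ 2 + B ^ 2)]
    simp [← Finset.mul_sum]
  calc ∑ j : Fin N, ∑ k : Fin N, (A * x j * x k + B * (if k = j then (1:ℝ) else 0)) ^ 2
      = ∑ j : Fin N, (A ^ 2 * (x j) ^ 2 * (∑ i, x i ^ 2)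
          + (2 * A * B * (x j) ^ 2 + B ^ 2)) := Finset.sum_congr rfl (fun j _ => hinner j)
    _ = (∑ j : Fin N, A ^ 2 * (x j) ^ 2 * (∑ i, x i ^ 2))
          + ((∑ j : Fin N, 2 * A * B * (x j) ^ 2) + ∑ j : Fin N, (B ^ 2 : ℝ)) := by
        rw [Finset.sum_add_distrib, Finset.sum_add_distrib]
    _ = A ^ 2 * (∑ i, x i ^ 2) ^ 2 + 2 * A * B * (∑ i, x i ^ 2) + N * B ^ 2 := by
        rw [Finset.sum_const, Finset.card_univ, Fintype.card_fin, nsmul_eq_mul,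
          ← Finset.sum_mul, ← Finset.mul_sum, ← Finset.mul_sum]
        ring

theorem norm_sq_eq_sum (x : Euc N) : (∑ i, x i ^ 2) = ‖x‖ ^ 2 := by
  rw [EuclideanSpace.norm_eq, Real.sq_sqrt (by positivity)]
  exact Finset.sum_congr rfl fun i _ => by rw [Real.norm_eq_abs, sq_abs]

theorem key1_algebra (X Y Z g av bv Nr : ℝ) (hY : Y ≠ 0) :
    X * (((g * (av - bv * Z) + g) ^ 2 + (Nr - 1) * g ^ 2) / Y)
      = ((av + 1) ^ 2 + Nr - 1) * (X / Y * g ^ 2)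
        + (-(2 * (av + 1) * bv)) * (X / Y * Z * g ^ 2)
        + bv ^ 2 * (X / Y * Z ^ 2 * g ^ 2) := by
  field_simp
  ring

end AuxFDeriv

set_option maxHeartbeats 1000000 in
/-- **Sharpness in the case `a − b + 1 > 0`** (Theorem 1(1)): the vector fields
`U(x) = γ |x|^{−N/2 + a + √((1 − N/2 + a)² + N − 1)} e^{−β|x|^{a−b+1}/(a−b+1)} x`, `β > 0`,
are curl-free, belong to `X_{a,b}(ℝ^N)`, and attain equality in the CKN inequality. -/
theorem ckn_curl_free_pos_extremal (N : ℕ) (hN : 2 ≤ N) (a b : ℝ)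
    (hcond : ((N : ℝ) / 2 - a) ^ 2 ≥ (N : ℝ) + 1) (hab : a - b + 1 > 0)
    (γ β : ℝ) (hβ : 0 < β)
    (U : Euc N → Euc N)
    (hUdef : ∀ x : Euc N, x ≠ 0 → U x =
      (γ * ‖x‖ ^ (-(N : ℝ) / 2 + a + Real.sqrt ((1 - (N : ℝ) / 2 + a) ^ 2 + N - 1)) *
        Real.exp (-(β / (a - b + 1)) * ‖x‖ ^ (a - b + 1))) • x) :
    IsCurlFree U ∧ MemX N a b U ∧
    (∫ x : Euc N, gradNormSq U x / ‖x‖ ^ (2 * a)) *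
      (∫ x : Euc N, ‖U x‖ ^ 2 / ‖x‖ ^ (2 * b)) =
    (Real.sqrt ((1 - (N : ℝ) / 2 + a) ^ 2 + N - 1) + (a - b + 1) / 2) ^ 2 *
      (∫ x : Euc N, ‖U x‖ ^ 2 / ‖x‖ ^ (a + b + 1)) ^ 2 := by
  classical
  have hN0 : 0 < N := by omega
  have hNr : (2:ℝ) ≤ (N:ℝ) := by exact_mod_cast hN
  set σ := Real.sqrt ((1 - (N : ℝ) / 2 + a) ^ 2 + N - 1) with hσdef
  set p := a - b + 1 with hpdef
  set α := -(N : ℝ) / 2 + a + σ with hαdef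
  have hp : 0 < p := hab
  have hbase : (0:ℝ) < (1 - (N : ℝ) / 2 + a) ^ 2 + N - 1 := by
    nlinarith [sq_nonneg (1 - (N:ℝ)/2 + a)]
  have hσpos : 0 < σ := by rw [hσdef]; exact Real.sqrt_pos.2 hbase
  have hσsq : σ ^ 2 = (1 - (N : ℝ) / 2 + a) ^ 2 + N - 1 := by
    rw [hσdef]; exact Real.sq_sqrt hbase.le
  have hc : (0:ℝ) < β / p := div_pos hβ hp
  have hU : ∀ x : Euc N, x ≠ 0 → U x = gfun γ α β p ‖x‖ • x := fun x hx => hUdef x hx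
  haveI : Nontrivial (Euc N) := by
    refine nontrivial_of_ne (EuclideanSpace.single (⟨0, hN0⟩ : Fin N) (1:ℝ)) 0 (fun h => ?_)
    have h2 : ‖EuclideanSpace.single (⟨0, hN0⟩ : Fin N) (1:ℝ)‖ = ‖(0 : Euc N)‖ := by rw [h]
    rw [EuclideanSpace.norm_single, norm_zero] at h2
    simpa using h2
  have hdim : Module.finrank ℝ (Euc N) = N := finrank_euclideanSpace_fin
  -- fderiv entries
  have hfder : ∀ x : Euc N, x ≠ 0 → ∀ j k : Fin N,
      fderiv ℝ U x (EuclideanSpace.single j 1) k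
        = (dgfun γ α β p ‖x‖ * ‖x‖⁻¹) * x j * x k
          + gfun γ α β p ‖x‖ * (if k = j then 1 else 0) := by
    intro x hx j k
    have hev : U =ᶠ[nhds x] fun y : Euc N => gfun γ α β p ‖y‖ • y := by
      filter_upwards [isOpen_compl_singleton.mem_nhds hx] with y hy
      exact hU y hy
    have hF := (hasFDerivAt_radial hp hx).congr_of_eventuallyEq hev
    rw [hF.fderiv]
    exact radial_deriv_entry hp hx j k
  -- curl-free
  have hcurl : IsCurlFree U := by
    intro x hx j k
    rw [hfder x hx j k, hfder x hx k j]
    by_cases h : j = k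
    · subst h; ring
    · rw [if_neg (Ne.symm h), if_neg h]; ring
  -- gradNormSq
  have hgrad : ∀ x : Euc N, x ≠ 0 → gradNormSq U x
      = (dgfun γ α β p ‖x‖ * ‖x‖ + gfun γ α β p ‖x‖) ^ 2
        + ((N:ℝ) - 1) * (gfun γ α β p ‖x‖) ^ 2 := by
    intro x hx
    have hr : (0:ℝ) < ‖x‖ := norm_pos_iff.2 hx
    have h0 : ‖x‖ ≠ 0 := hr.ne'
    unfold gradNormSq
    rw [Finset.sum_congr rfl fun j _ => Finset.sum_congr rfl fun k _ => by
      rw [hfder x hx j k]]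
    rw [sum_entry_sq x (dgfun γ α β p ‖x‖ * ‖x‖⁻¹) (gfun γ α β p ‖x‖), norm_sq_eq_sum]
    field_simp
    ring
  have hUsq : ∀ x : Euc N, x ≠ 0 → ‖U x‖ ^ 2 = (gfun γ α β p ‖x‖) ^ 2 * ‖x‖ ^ 2 := by
    intro x hx
    rw [hU x hx, norm_smul, Real.norm_eq_abs, mul_pow, sq_abs]
  -- a.e. statements
  have h0ae : ∀ᵐ x : Euc N ∂volume, x ≠ 0 := by
    have h : (volume ({(0 : Euc N)} : Set (Euc N))) = 0 := measure_singleton _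
    filter_upwards [measure_eq_zero_iff_ae_notMem.1 h] with x hx
    simpa using hx
  have hae1 : (fun x : Euc N => gradNormSq U x / ‖x‖ ^ (2*a)) =ᵐ[volume]
      fun x : Euc N => ((dgfun γ α β p ‖x‖ * ‖x‖ + gfun γ α β p ‖x‖) ^ 2
        + ((N:ℝ) - 1) * (gfun γ α β p ‖x‖) ^ 2) / ‖x‖ ^ (2*a) := by
    filter_upwards [h0ae] with x hx
    rw [hgrad x hx]
  have hae2 : (fun x : Euc N => ‖U x‖ ^ 2 / ‖x‖ ^ (2*b)) =ᵐ[volume]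
      fun x : Euc N => (gfun γ α β p ‖x‖) ^ 2 * ‖x‖ ^ 2 / ‖x‖ ^ (2*b) := by
    filter_upwards [h0ae] with x hx
    rw [hUsq x hx]
  have hae3 : (fun x : Euc N => ‖U x‖ ^ 2 / ‖x‖ ^ (a+b+1)) =ᵐ[volume]
      fun x : Euc N => (gfun γ α β p ‖x‖) ^ 2 * ‖x‖ ^ 2 / ‖x‖ ^ (a+b+1) := by
    filter_upwards [h0ae] with x hx
    rw [hUsq x hx]
  -- exponent facts
  have hnum0 : 2*α + ((N:ℝ)-1-2*a) + 1 = 2*σ := by rw [hαdef]; ring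
  have hnum1 : 2*α + ((N:ℝ)-1-2*a+p) + 1 = 2*σ + p := by rw [hαdef]; ring
  have hnum2 : 2*α + ((N:ℝ)-1-2*a+2*p) + 1 = 2*σ + 2*p := by rw [hαdef]; ring
  have hcond0 : -1 < 2*α + ((N:ℝ)-1-2*a) := by nlinarith [hnum0, hσpos]
  have hcond1 : -1 < 2*α + ((N:ℝ)-1-2*a+p) := by nlinarith [hnum1, hσpos, hp]
  have hcond2 : -1 < 2*α + ((N:ℝ)-1-2*a+2*p) := by nlinarith [hnum2, hσpos, hp]
  have hint0 : IntegrableOn (fun r : ℝ => r ^ ((N:ℝ)-1-2*a) * (gfun γ α β p r)^2)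
      (Set.Ioi (0:ℝ)) := integrableOn_gsq hp hβ hcond0
  have hint1 : IntegrableOn (fun r : ℝ => r ^ ((N:ℝ)-1-2*a+p) * (gfun γ α β p r)^2)
      (Set.Ioi (0:ℝ)) := integrableOn_gsq hp hβ hcond1
  have hint2 : IntegrableOn (fun r : ℝ => r ^ ((N:ℝ)-1-2*a+2*p) * (gfun γ α β p r)^2)
      (Set.Ioi (0:ℝ)) := integrableOn_gsq hp hβ hcond2
  -- natural power to rpow
  have hnat : ∀ r : ℝ, 0 < r → (r:ℝ) ^ (N - 1 : ℕ) = r ^ ((N:ℝ) - 1) := by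
    intro r hr
    rw [← Real.rpow_natCast r (N-1)]
    congr 1
    push_cast [Nat.cast_sub (by omega : 1 ≤ N)]
    ring
  -- key pointwise identities on Ioi 0
  have key1 : ∀ r ∈ Set.Ioi (0:ℝ),
      (r:ℝ) ^ (N - 1 : ℕ) * (((dgfun γ α β p r * r + gfun γ α β p r) ^ 2
          + ((N:ℝ) - 1) * (gfun γ α β p r) ^ 2) / r ^ (2*a))
        = ((α+1)^2 + (N:ℝ) - 1) * (r ^ ((N:ℝ)-1-2*a) * (gfun γ α β p r)^2)
          + (-(2*(α+1)*β)) * (r ^ ((N:ℝ)-1-2*a+p) * (gfun γ α β p r)^2)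
          + β^2 * (r ^ ((N:ℝ)-1-2*a+2*p) * (gfun γ α β p r)^2) := by
    intro r hr
    have hr0 : (0:ℝ) < r := hr
    have hdg : dgfun γ α β p r * r = gfun γ α β p r * (α - β * r ^ p) := by
      unfold dgfun; field_simp
    have e1 : r ^ ((N:ℝ)-1-2*a) = r ^ ((N:ℝ)-1) / r ^ (2*a) := Real.rpow_sub hr0 _ _
    have e2 : r ^ ((N:ℝ)-1-2*a+p) = r ^ ((N:ℝ)-1) / r ^ (2*a) * r ^ p := by
      rw [Real.rpow_add hr0, e1]
    have e3 : r ^ ((N:ℝ)-1-2*a+2*p) = r ^ ((N:ℝ)-1) / r ^ (2*a) * (r ^ p)^2 := by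
      rw [show (N:ℝ)-1-2*a+2*p = ((N:ℝ)-1-2*a) + p + p by ring, Real.rpow_add hr0,
        Real.rpow_add hr0, e1]
      ring
    rw [hnat r hr0, hdg, e1, e2, e3]
    exact key1_algebra _ _ _ _ _ _ _ (Real.rpow_pos_of_pos hr0 _).ne'
  have key2 : ∀ r ∈ Set.Ioi (0:ℝ),
      (r:ℝ) ^ (N - 1 : ℕ) * ((gfun γ α β p r) ^ 2 * r ^ 2 / r ^ (2*b))
        = r ^ ((N:ℝ)-1-2*a+2*p) * (gfun γ α β p r)^2 := by
    intro r hr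
    have hr0 : (0:ℝ) < r := hr
    have e : r ^ ((N:ℝ)-1-2*a+2*p) = r ^ ((N:ℝ)-1) * r ^ (2:ℕ) / r ^ (2*b) := by
      rw [show (N:ℝ)-1-2*a+2*p = (((N:ℝ)-1) + (2:ℕ)) - 2*b by rw [hpdef]; push_cast; ring,
        Real.rpow_sub hr0, Real.rpow_add hr0, Real.rpow_natCast]
    rw [hnat r hr0, e]
    ring
  have key3 : ∀ r ∈ Set.Ioi (0:ℝ),
      (r:ℝ) ^ (N - 1 : ℕ) * ((gfun γ α β p r) ^ 2 * r ^ 2 / r ^ (a+b+1))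
        = r ^ ((N:ℝ)-1-2*a+p) * (gfun γ α β p r)^2 := by
    intro r hr
    have hr0 : (0:ℝ) < r := hr
    have e : r ^ ((N:ℝ)-1-2*a+p) = r ^ ((N:ℝ)-1) * r ^ (2:ℕ) / r ^ (a+b+1) := by
      rw [show (N:ℝ)-1-2*a+p = (((N:ℝ)-1) + (2:ℕ)) - (a+b+1) by rw [hpdef]; push_cast; ring,
        Real.rpow_sub hr0, Real.rpow_add hr0, Real.rpow_natCast]
    rw [hnat r hr0, e]
    ring
  -- measurability
  have hmg : Measurable (gfun γ α β p) := by unfold gfun; fun_prop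
  have hmdg : Measurable (dgfun γ α β p) := by unfold dgfun gfun; fun_prop
  have hm1 : Measurable (fun r : ℝ => ((dgfun γ α β p r * r + gfun γ α β p r) ^ 2
      + ((N:ℝ) - 1) * (gfun γ α β p r) ^ 2) / r ^ (2*a)) := by fun_prop
  have hm2 : Measurable (fun r : ℝ => (gfun γ α β p r) ^ 2 * r ^ 2 / r ^ (2*b)) := by fun_prop
  have hm3 : Measurable (fun r : ℝ => (gfun γ α β p r) ^ 2 * r ^ 2 / r ^ (a+b+1)) := by fun_prop
  -- integrability of the three integrands
  have hIOn1 : IntegrableOn (fun r : ℝ => r ^ (Module.finrank ℝ (Euc N) - 1 : ℕ) *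
      (((dgfun γ α β p r * r + gfun γ α β p r) ^ 2
        + ((N:ℝ) - 1) * (gfun γ α β p r) ^ 2) / r ^ (2*a))) (Set.Ioi (0:ℝ)) := by
    rw [hdim]
    exact IntegrableOn.congr_fun
      (((hint0.const_mul _).add (hint1.const_mul _)).add (hint2.const_mul _))
      (fun r hr => (key1 r hr).symm) measurableSet_Ioi
  have hIOn2 : IntegrableOn (fun r : ℝ => r ^ (Module.finrank ℝ (Euc N) - 1 : ℕ) *
      ((gfun γ α β p r) ^ 2 * r ^ 2 / r ^ (2*b))) (Set.Ioi (0:ℝ)) := by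
    rw [hdim]
    exact IntegrableOn.congr_fun hint2 (fun r hr => (key2 r hr).symm) measurableSet_Ioi
  have hIOn3 : IntegrableOn (fun r : ℝ => r ^ (Module.finrank ℝ (Euc N) - 1 : ℕ) *
      ((gfun γ α β p r) ^ 2 * r ^ 2 / r ^ (a+b+1))) (Set.Ioi (0:ℝ)) := by
    rw [hdim]
    exact IntegrableOn.congr_fun hint1 (fun r hr => (key3 r hr).symm) measurableSet_Ioi
  have hInt1 : Integrable (fun x : Euc N => gradNormSq U x / ‖x‖ ^ (2*a)) :=
    (integrable_fun_norm_addHaar_of volume hm1 hIOn1).congr hae1.symm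
  have hInt2 : Integrable (fun x : Euc N => ‖U x‖ ^ 2 / ‖x‖ ^ (2*b)) :=
    (integrable_fun_norm_addHaar_of volume hm2 hIOn2).congr hae2.symm
  have hInt3 : Integrable (fun x : Euc N => ‖U x‖ ^ 2 / ‖x‖ ^ (a+b+1)) :=
    (integrable_fun_norm_addHaar_of volume hm3 hIOn3).congr hae3.symm
  -- 1D integral values
  set θ := 2*σ/p with hθdef
  set d := 2*(β/p) with hddef
  have hd : 0 < d := by rw [hddef]; positivity
  have hθpos : 0 < θ := by rw [hθdef]; positivity
  set G0 := γ^2 * (d ^ (-θ) * (1/p) * Real.Gamma θ) with hG0def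
  have hI0 : ∫ r in Set.Ioi (0:ℝ), r ^ ((N:ℝ)-1-2*a) * (gfun γ α β p r)^2 = G0 := by
    rw [integral_gsq hp hβ hcond0, hnum0, hG0def, hθdef, hddef, neg_div]
  have hI1 : ∫ r in Set.Ioi (0:ℝ), r ^ ((N:ℝ)-1-2*a+p) * (gfun γ α β p r)^2
      = (σ/β) * G0 := by
    rw [integral_gsq hp hβ hcond1, hnum1]
    have hdiv1 : (2*σ + p)/p = θ + 1 := by rw [hθdef]; field_simp
    rw [neg_div, hdiv1, Real.Gamma_add_one hθpos.ne',
      show -(θ+1) = -θ + (-1) by ring, Real.rpow_add hd, Real.rpow_neg_one,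
      hG0def, hθdef, hddef]
    field_simp
  have hI2 : ∫ r in Set.Ioi (0:ℝ), r ^ ((N:ℝ)-1-2*a+2*p) * (gfun γ α β p r)^2
      = (σ*(σ+p/2)/β^2) * G0 := by
    rw [integral_gsq hp hβ hcond2, hnum2]
    have hdiv2 : (2*σ + 2*p)/p = θ + 2 := by rw [hθdef]; field_simp
    rw [neg_div, hdiv2,
      show θ+2 = (θ+1)+1 by ring, Real.Gamma_add_one (by positivity : θ+1 ≠ 0)]
    rw [Real.Gamma_add_one hθpos.ne',
      show -((θ+1)+1) = -θ + (-1) + (-1) by ring, Real.rpow_add hd, Real.rpow_add hd,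
      Real.rpow_neg_one, hG0def, hθdef, hddef]
    field_simp
  -- the three integrals over Euc N
  set κ := (volume (Metric.ball (0:Euc N) 1)).toReal with hκdef
  have hc0 : (α+1)^2 + (N:ℝ) - 1 = 2*σ*(α+1) := by
    rw [hαdef]; linear_combination -hσsq
  have hsum1 : ∫ r in Set.Ioi (0:ℝ), (r:ℝ) ^ (N - 1 : ℕ) •
      (((dgfun γ α β p r * r + gfun γ α β p r) ^ 2
        + ((N:ℝ) - 1) * (gfun γ α β p r) ^ 2) / r ^ (2*a)) = σ*(σ+p/2) * G0 := by
    simp only [smul_eq_mul]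
    rw [setIntegral_congr_fun measurableSet_Ioi key1]
    have hA : IntegrableOn (fun r : ℝ => ((α+1)^2 + (N:ℝ) - 1)
        * (r ^ ((N:ℝ)-1-2*a) * (gfun γ α β p r)^2)) (Set.Ioi (0:ℝ)) := hint0.const_mul _
    have hB : IntegrableOn (fun r : ℝ => (-(2*(α+1)*β))
        * (r ^ ((N:ℝ)-1-2*a+p) * (gfun γ α β p r)^2)) (Set.Ioi (0:ℝ)) := hint1.const_mul _
    have hC : IntegrableOn (fun r : ℝ => β^2
        * (r ^ ((N:ℝ)-1-2*a+2*p) * (gfun γ α β p r)^2)) (Set.Ioi (0:ℝ)) := hint2.const_mul _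
    have hAB : IntegrableOn (fun r : ℝ => ((α+1)^2 + (N:ℝ) - 1)
        * (r ^ ((N:ℝ)-1-2*a) * (gfun γ α β p r)^2) + (-(2*(α+1)*β))
        * (r ^ ((N:ℝ)-1-2*a+p) * (gfun γ α β p r)^2)) (Set.Ioi (0:ℝ)) := hA.add hB
    rw [integral_add hAB hC, integral_add hA hB,
      integral_const_mul, integral_const_mul, integral_const_mul, hI0, hI1, hI2, hc0]
    field_simp
    ring
  have hsum2 : ∫ r in Set.Ioi (0:ℝ), (r:ℝ) ^ (N - 1 : ℕ) •
      ((gfun γ α β p r) ^ 2 * r ^ 2 / r ^ (2*b)) = (σ*(σ+p/2)/β^2) * G0 := by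
    simp only [smul_eq_mul]
    rw [setIntegral_congr_fun measurableSet_Ioi key2, hI2]
  have hsum3 : ∫ r in Set.Ioi (0:ℝ), (r:ℝ) ^ (N - 1 : ℕ) •
      ((gfun γ α β p r) ^ 2 * r ^ 2 / r ^ (a+b+1)) = (σ/β) * G0 := by
    simp only [smul_eq_mul]
    rw [setIntegral_congr_fun measurableSet_Ioi key3, hI1]
  have hE1 : (∫ x : Euc N, gradNormSq U x / ‖x‖ ^ (2*a))
      = (N:ℝ) * κ * (σ*(σ+p/2) * G0) := by
    rw [integral_congr_ae hae1,
      integral_fun_norm_addHaar volume (fun r : ℝ => ((dgfun γ α β p r * r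
        + gfun γ α β p r) ^ 2 + ((N:ℝ) - 1) * (gfun γ α β p r) ^ 2) / r ^ (2*a)),
      hdim, hsum1, nsmul_eq_mul, smul_eq_mul, hκdef, measureReal_def]
    ring
  have hE2 : (∫ x : Euc N, ‖U x‖ ^ 2 / ‖x‖ ^ (2*b))
      = (N:ℝ) * κ * ((σ*(σ+p/2)/β^2) * G0) := by
    rw [integral_congr_ae hae2,
      integral_fun_norm_addHaar volume
        (fun r : ℝ => (gfun γ α β p r) ^ 2 * r ^ 2 / r ^ (2*b)),
      hdim, hsum2, nsmul_eq_mul, smul_eq_mul, hκdef, measureReal_def]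
    ring
  have hE3 : (∫ x : Euc N, ‖U x‖ ^ 2 / ‖x‖ ^ (a+b+1))
      = (N:ℝ) * κ * ((σ/β) * G0) := by
    rw [integral_congr_ae hae3,
      integral_fun_norm_addHaar volume
        (fun r : ℝ => (gfun γ α β p r) ^ 2 * r ^ 2 / r ^ (a+b+1)),
      hdim, hsum3, nsmul_eq_mul, smul_eq_mul, hκdef, measureReal_def]
    ring
  -- decay
  have hnormval : ∀ (t : ℝ) (x : Euc N), x ≠ 0 →
      |γ| * (‖x‖ ^ (t+α+1) * Real.exp (-(β/p) * ‖x‖ ^ p)) = ‖‖x‖ ^ t • U x‖ := by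
    intro t x hx
    have hr : (0:ℝ) < ‖x‖ := norm_pos_iff.2 hx
    rw [norm_smul, Real.norm_eq_abs, abs_of_nonneg (Real.rpow_nonneg (norm_nonneg x) t),
      hU x hx, norm_smul, Real.norm_eq_abs]
    simp only [gfun]
    rw [abs_mul, abs_mul, abs_of_pos (Real.rpow_pos_of_pos hr α),
      abs_of_pos (Real.exp_pos _),
      show t+α+1 = t + α + 1 from rfl, Real.rpow_add hr, Real.rpow_add hr, Real.rpow_one]
    ring
  have hdecayZ : ∀ t : ℝ, 0 < t + α + 1 →
      Tendsto (fun x : Euc N => ‖x‖ ^ t • U x) (nhdsWithin 0 {(0:Euc N)}ᶜ) (nhds 0) := by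
    intro t ht
    rw [tendsto_zero_iff_norm_tendsto_zero]
    have hmap : Tendsto (fun x : Euc N => ‖x‖) (nhdsWithin 0 {(0:Euc N)}ᶜ)
        (nhdsWithin 0 (Set.Ioi 0)) := by
      rw [tendsto_nhdsWithin_iff]
      constructor
      · exact (continuous_norm.tendsto' 0 0 norm_zero).mono_left nhdsWithin_le_nhds
      · filter_upwards [self_mem_nhdsWithin] with x hx
        exact norm_pos_iff.2 hx
    have hlim := ((tendsto_rpow_exp_zero hp hc ht).comp hmap).const_mul |γ|
    rw [mul_zero] at hlim
    refine Tendsto.congr' ?_ hlim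
    filter_upwards [self_mem_nhdsWithin] with x hx
    exact hnormval t x hx
  have hdecayI : ∀ t : ℝ,
      Tendsto (fun x : Euc N => ‖x‖ ^ t • U x)
        (comap (fun x : Euc N => ‖x‖) atTop) (nhds 0) := by
    intro t
    rw [tendsto_zero_iff_norm_tendsto_zero]
    have h1 : Tendsto (fun x : Euc N => ‖x‖) (comap (fun x : Euc N => ‖x‖) atTop) atTop :=
      tendsto_comap
    have hlim := ((tendsto_rpow_exp_atTop hp (t+α+1) hc).comp h1).const_mul |γ|
    rw [mul_zero] at hlim
    refine Tendsto.congr' ?_ hlim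
    have hev : ∀ᶠ x : Euc N in comap (fun x : Euc N => ‖x‖) atTop, x ≠ 0 := by
      have hmem : {x : Euc N | 1 ≤ ‖x‖} ∈ comap (fun x : Euc N => ‖x‖) atTop :=
        preimage_mem_comap (eventually_ge_atTop 1)
      filter_upwards [hmem] with x hx
      intro h0
      rw [h0, norm_zero] at hx
      exact absurd hx (by norm_num)
    filter_upwards [hev] with x hx
    exact hnormval t x hx
  -- smoothness
  have hsmooth : ContDiffOn ℝ (⊤ : ℕ∞) U {(0:Euc N)}ᶜ := by
    intro x hx
    have hx0 : x ≠ 0 := hx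
    apply ContDiffAt.contDiffWithinAt
    have hev : U =ᶠ[nhds x] fun y : Euc N => gfun γ α β p ‖y‖ • y := by
      filter_upwards [isOpen_compl_singleton.mem_nhds hx0] with y hy
      exact hU y hy
    refine ContDiffAt.congr_of_eventuallyEq ?_ hev
    have hn := contDiffAt_norm (𝕜 := ℝ) (n := (⊤ : ℕ∞)) hx0
    have h1 : ContDiffAt ℝ (⊤ : ℕ∞) (fun y : Euc N => γ * ‖y‖ ^ α) x :=
      contDiffAt_const.mul (hn.rpow_const_of_ne (norm_ne_zero_iff.2 hx0))
    have h2 : ContDiffAt ℝ (⊤ : ℕ∞) (fun y : Euc N => Real.exp (-(β/p) * ‖y‖ ^ p)) x :=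
      (contDiffAt_const.mul (hn.rpow_const_of_ne (norm_ne_zero_iff.2 hx0))).exp
    have h3 := (h1.mul h2).smul contDiffAt_id
    simp only [gfun]
    exact h3
  -- assemble
  refine ⟨hcurl, ⟨hsmooth, hInt1, hInt2, hInt3, ?_, ?_, ?_, ?_⟩, ?_⟩
  · exact hdecayZ _ (by rw [hαdef]; have := hσpos; push_cast; linarith)
  · exact hdecayI _
  · exact hdecayZ _ (by rw [hαdef, hpdef] at *; have := hσpos; push_cast; linarith)
  · exact hdecayI _
  · rw [hE1, hE2, hE3]
    have hβ' : β ≠ 0 := hβ.ne'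
    field_simp
end
end

section
/- Let c ∈ ℝ with c ≠ 0 and let α ∈ ℝ. Let v : ℝ → ℝ be continuously differentiable with ∫_ℝ |v'(t)|² dt < ∞, ∫_ℝ v(t)² dt < ∞, ∫_ℝ e^{2ct} v(t)² dt < ∞, ∫_ℝ e^{ct} v(t)² dt < ∞, and with lim_{t→±∞} v(t)² = 0 and lim_{t→±∞} e^{ct} v(t)² = 0. Then (∫_ℝ |v'(t)|² dt + α² ∫_ℝ v(t)² dt) · (∫_ℝ e^{2ct} v(t)² dt) ≥ (α − c/2)² · (∫_ℝ e^{ct} v(t)² dt)². -/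
noncomputable section
open MeasureTheory Real Filter

/-- FTC on the whole real line with limits at ±∞. -/
theorem integral_real_of_hasDerivAt_of_tendsto {F F' : ℝ → ℝ} {Lt Lb : ℝ}
    (hderiv : ∀ x, HasDerivAt F (F' x) x) (hint : Integrable F')
    (htop : Tendsto F atTop (nhds Lt)) (hbot : Tendsto F atBot (nhds Lb)) :
    ∫ x, F' x = Lt - Lb := by
  rw [← intervalIntegral.integral_Iic_add_Ioi (b := (0:ℝ)) hint.integrableOn hint.integrableOn]
  rw [integral_Iic_of_hasDerivAt_of_tendsto' (fun x _ => hderiv x) hint.integrableOn hbot,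
    integral_Ioi_of_hasDerivAt_of_tendsto' (fun x _ => hderiv x) hint.integrableOn htop]
  ring

/-- **One-dimensional expanding-the-square inequality in logarithmic coordinates**: for
`c ≠ 0`, `α ∈ ℝ` and a `C¹` function `v : ℝ → ℝ` with the stated integrability and decay, 
`(∫ |v'|² + α² ∫ v²) (∫ e^{2ct} v²) ≥ (α − c/2)² (∫ e^{ct} v²)²`. -/
theorem one_dim_expanding_square (c α : ℝ) (hc : c ≠ 0)
    (v : ℝ → ℝ) (hv : ContDiff ℝ 1 v)
    (hint1 : Integrable (fun t : ℝ => (deriv v t) ^ 2))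
    (hint2 : Integrable (fun t : ℝ => (v t) ^ 2))
    (hint3 : Integrable (fun t : ℝ => Real.exp (2 * c * t) * (v t) ^ 2))
    (hint4 : Integrable (fun t : ℝ => Real.exp (c * t) * (v t) ^ 2))
    (hlim_top : Tendsto (fun t : ℝ => (v t) ^ 2) atTop (nhds 0))
    (hlim_bot : Tendsto (fun t : ℝ => (v t) ^ 2) atBot (nhds 0))
    (hlim_exp_top : Tendsto (fun t : ℝ => Real.exp (c * t) * (v t) ^ 2) atTop (nhds 0))
    (hlim_exp_bot : Tendsto (fun t : ℝ => Real.exp (c * t) * (v t) ^ 2) atBot (nhds 0)) :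
    ((∫ t : ℝ, (deriv v t) ^ 2) + α ^ 2 * ∫ t : ℝ, (v t) ^ 2) *
      (∫ t : ℝ, Real.exp (2 * c * t) * (v t) ^ 2) ≥
    (α - c / 2) ^ 2 * (∫ t : ℝ, Real.exp (c * t) * (v t) ^ 2) ^ 2 := by
  have hv' : ∀ x : ℝ, HasDerivAt v (deriv v x) x :=
    fun x => (hv.differentiable one_ne_zero x).hasDerivAt
  have hcv : Continuous v := hv.continuous
  have hcv' : Continuous (deriv v) := hv.continuous_deriv le_rfl
  have hexp2 : ∀ t : ℝ, Real.exp (2 * c * t) = Real.exp (c * t) * Real.exp (c * t) := by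
    intro t; rw [← Real.exp_add]; ring_nf
  -- integrability of v * v'
  have hI_vv' : Integrable (fun t : ℝ => v t * deriv v t) := by
    refine Integrable.mono' ((hint2.add hint1).div_const 2)
      ((hcv.mul hcv').aestronglyMeasurable) (Filter.Eventually.of_forall fun t => ?_)
    have h1 := sq_nonneg (|v t| - |deriv v t|)
    simp only [Pi.add_apply, Real.norm_eq_abs, abs_mul]
    nlinarith [sq_abs (v t), sq_abs (deriv v t), abs_nonneg (v t), abs_nonneg (deriv v t)]
  -- integrability of e^{ct} v v'
  have hI_evv' : Integrable (fun t : ℝ => Real.exp (c * t) * (v t * deriv v t)) := by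
    refine Integrable.mono' ((hint3.add hint1).div_const 2)
      (((Real.continuous_exp.comp (continuous_const.mul continuous_id)).mul
        (hcv.mul hcv')).aestronglyMeasurable) (Filter.Eventually.of_forall fun t => ?_)
    have he : (0:ℝ) < Real.exp (c * t) := Real.exp_pos _
    simp only [Pi.add_apply, Real.norm_eq_abs, abs_mul, abs_of_pos he]
    rw [hexp2 t]
    nlinarith [sq_nonneg (Real.exp (c * t) * |v t| - |deriv v t|), sq_abs (v t),
      sq_abs (deriv v t), abs_nonneg (v t), abs_nonneg (deriv v t), he.le]
  -- ∫ v v' = 0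
  have h1 : ∫ t : ℝ, v t * deriv v t = 0 := by
    have key : ∫ t : ℝ, 2 * (v t * deriv v t) = 0 - 0 := by
      refine integral_real_of_hasDerivAt_of_tendsto (F := fun t => (v t) ^ 2)
        (fun x => ?_) (hI_vv'.const_mul 2) hlim_top hlim_bot
      have := (hv' x).pow 2
      exact this.congr_deriv (by push_cast; ring)
    rw [MeasureTheory.integral_const_mul] at key
    linarith
  -- ∫ e^{ct} v v' = -(c/2) ∫ e^{ct} v²
  have h2 : ∫ t : ℝ, Real.exp (c * t) * (v t * deriv v t) =
      -(c / 2) * ∫ t : ℝ, Real.exp (c * t) * (v t) ^ 2 := by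
    have key : ∫ t : ℝ, (c * (Real.exp (c * t) * (v t) ^ 2) +
        2 * (Real.exp (c * t) * (v t * deriv v t))) = 0 - 0 := by
      refine integral_real_of_hasDerivAt_of_tendsto
        (F := fun t => Real.exp (c * t) * (v t) ^ 2) (fun x => ?_)
        ((hint4.const_mul c).add (hI_evv'.const_mul 2)) hlim_exp_top hlim_exp_bot
      have hde : HasDerivAt (fun t : ℝ => Real.exp (c * t)) (Real.exp (c * x) * c) x := by
        have : HasDerivAt (fun t : ℝ => c * t) c x := by
          simpa using (hasDerivAt_id x).const_mul c
        exact this.exp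
      have := hde.mul ((hv' x).pow 2)
      exact this.congr_deriv (by simp only [Pi.pow_apply]; push_cast; ring)
    rw [integral_add (hint4.const_mul c) (hI_evv'.const_mul 2),
      MeasureTheory.integral_const_mul, MeasureTheory.integral_const_mul] at key
    linarith
  set A := ∫ t : ℝ, (deriv v t) ^ 2 with hA
  set B := ∫ t : ℝ, (v t) ^ 2 with hB
  set C2 := ∫ t : ℝ, Real.exp (2 * c * t) * (v t) ^ 2 with hC2
  set C1 := ∫ t : ℝ, Real.exp (c * t) * (v t) ^ 2 with hC1
  -- key quadratic inequality
  have key : ∀ β : ℝ, 0 ≤ A + α ^ 2 * B + β ^ 2 * C2 + 2 * β * (α - c / 2) * C1 := by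
    intro β
    have h0 : 0 ≤ ∫ t : ℝ, (deriv v t + α * v t + β * Real.exp (c * t) * v t) ^ 2 :=
      integral_nonneg fun t => sq_nonneg _
    have expand : (fun t : ℝ => (deriv v t + α * v t + β * Real.exp (c * t) * v t) ^ 2) =
        fun t : ℝ => (deriv v t) ^ 2 + α ^ 2 * (v t) ^ 2 +
          β ^ 2 * (Real.exp (2 * c * t) * (v t) ^ 2) + 2 * α * (v t * deriv v t) +
          2 * β * (Real.exp (c * t) * (v t * deriv v t)) +
          2 * (α * β) * (Real.exp (c * t) * (v t) ^ 2) := by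
      funext t; rw [hexp2 t]; ring
    rw [expand] at h0
    have i2 := hint2.const_mul (α ^ 2)
    have i3 := hint3.const_mul (β ^ 2)
    have i4 := hI_vv'.const_mul (2 * α)
    have i5 := hI_evv'.const_mul (2 * β)
    have i6 := hint4.const_mul (2 * (α * β))
    have i12 : Integrable (fun t : ℝ => (deriv v t) ^ 2 + α ^ 2 * (v t) ^ 2) := hint1.add i2
    have i13 : Integrable (fun t : ℝ => (deriv v t) ^ 2 + α ^ 2 * (v t) ^ 2 +
        β ^ 2 * (Real.exp (2 * c * t) * (v t) ^ 2)) := i12.add i3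
    have i14 : Integrable (fun t : ℝ => (deriv v t) ^ 2 + α ^ 2 * (v t) ^ 2 +
        β ^ 2 * (Real.exp (2 * c * t) * (v t) ^ 2) + 2 * α * (v t * deriv v t)) := i13.add i4
    have i15 : Integrable (fun t : ℝ => (deriv v t) ^ 2 + α ^ 2 * (v t) ^ 2 +
        β ^ 2 * (Real.exp (2 * c * t) * (v t) ^ 2) + 2 * α * (v t * deriv v t) +
        2 * β * (Real.exp (c * t) * (v t * deriv v t))) := i14.add i5
    rw [integral_add i15 i6, integral_add i14 i5, integral_add i13 i4, integral_add i12 i3,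
      integral_add hint1 i2,
      MeasureTheory.integral_const_mul, MeasureTheory.integral_const_mul,
      MeasureTheory.integral_const_mul, MeasureTheory.integral_const_mul,
      MeasureTheory.integral_const_mul, h1, h2] at h0
    nlinarith [h0]
  have hC2nn : 0 ≤ C2 :=
    integral_nonneg fun t => mul_nonneg (Real.exp_pos _).le (sq_nonneg _)
  rcases hC2nn.eq_or_lt with hz | hpos
  · -- C2 = 0 forces v = 0 a.e., hence C1 = 0
    have hae : (fun t : ℝ => Real.exp (2 * c * t) * (v t) ^ 2) =ᵐ[volume] 0 := by
      rw [← MeasureTheory.integral_eq_zero_iff_of_nonneg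
        (fun t => mul_nonneg (Real.exp_pos _).le (sq_nonneg _)) hint3]
      exact hz.symm
    have hC1z : C1 = 0 := by
      rw [hC1]
      refine integral_eq_zero_of_ae ?_
      filter_upwards [hae] with t ht
      simp only [Pi.zero_apply] at ht ⊢
      have hv0 : (v t) ^ 2 = 0 := by
        have := (Real.exp_pos (2 * c * t)).ne'
        exact (mul_eq_zero.mp ht).resolve_left this
      rw [hv0, mul_zero]
    rw [← hz, hC1z]
    simp
  · -- C2 > 0: optimize β
    set β := -((α - c / 2) * C1) / C2 with hβ
    have h := key β
    rw [ge_iff_le, ← sub_nonneg]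
    have expr : (A + α ^ 2 * B) * C2 - (α - c / 2) ^ 2 * C1 ^ 2 =
        C2 * (A + α ^ 2 * B + β ^ 2 * C2 + 2 * β * (α - c / 2) * C1) := by
      rw [hβ]; field_simp; ring
    rw [expr]
    exact mul_nonneg hpos.le h
end
end

section
/- Let N ≥ 1 be an integer and a, t, λ, α ∈ ℝ with a ≠ −1 and α(α + N − 2) + λ = 0. Set s = t(N + 2a), β = 2a + 2, c = −t/(2a + 2), A = (α + N + 2a)/(2a + 2), B = (2α + 2a + N)/(2a + 2). Suppose v : ℝ → ℝ is twice differentiable and satisfies Kummer's equation z v''(z) + (B − z) v'(z) − A v(z) = 0 at every point z = c r^{β} with r > 0. Then the function y(r) = r^{α} v(c r^{β}) satisfies, for all r > 0, the ordinary differential equation y''(r) + ((N − 1)/r + t r^{2a+1}) y'(r) + (λ r^{−2} + s r^{2a}) y(r) = 0. -/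
noncomputable section
open Real

lemma helper (c β p : ℝ) (w : ℝ → ℝ) (hw : Differentiable ℝ w) (r : ℝ) (hr : 0 < r) :
    HasDerivAt (fun ρ : ℝ => ρ ^ p * w (c * ρ ^ β))
      (p * r ^ (p - 1) * w (c * r ^ β) + c * β * (r ^ (p + β - 1) * deriv w (c * r ^ β))) r := by
  have h1 : HasDerivAt (fun ρ : ℝ => ρ ^ p) (p * r ^ (p - 1)) r :=
    Real.hasDerivAt_rpow_const (Or.inl hr.ne')
  have h2 : HasDerivAt (fun ρ : ℝ => c * ρ ^ β) (c * (β * r ^ (β - 1))) r :=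
    (Real.hasDerivAt_rpow_const (Or.inl hr.ne')).const_mul c
  have h3 : HasDerivAt (fun ρ : ℝ => w (c * ρ ^ β))
      (deriv w (c * r ^ β) * (c * (β * r ^ (β - 1)))) r :=
    (hw.differentiableAt.hasDerivAt).comp r h2
  have h4 := h1.mul h3
  refine h4.congr_deriv ?_
  have : r ^ (p + β - 1) = r ^ p * r ^ (β - 1) := by
    rw [show p + β - 1 = p + (β - 1) by ring, Real.rpow_add hr]
  rw [this]; ring


/-- **Kummer change of variables**: if `α(α + N − 2) + λ = 0` and `v` is a twice
differentiable solution of Kummer's equation `z v'' + (B − z) v' − A v = 0` at every point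
`z = c r^β`, `r > 0`, where `β = 2a+2`, `c = −t/(2a+2)`, `A = (α+N+2a)/(2a+2)`,
`B = (2α+2a+N)/(2a+2)` and `s = t(N+2a)`, then `y(r) = r^α v(c r^β)` solves
`y'' + ((N−1)/r + t r^{2a+1}) y' + (λ r^{−2} + s r^{2a}) y = 0` for all `r > 0`. -/
theorem kummer_change_of_variables (N : ℕ) (hN : 1 ≤ N) (a t lam α : ℝ) (ha : a ≠ -1)
    (hα : α * (α + (N : ℝ) - 2) + lam = 0)
    (v : ℝ → ℝ) (hv : ContDiff ℝ 2 v)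
    (hkummer : ∀ r : ℝ, 0 < r →
      (-t / (2 * a + 2)) * r ^ (2 * a + 2) *
          deriv (deriv v) ((-t / (2 * a + 2)) * r ^ (2 * a + 2)) +
        ((2 * α + 2 * a + (N : ℝ)) / (2 * a + 2) -
            (-t / (2 * a + 2)) * r ^ (2 * a + 2)) *
          deriv v ((-t / (2 * a + 2)) * r ^ (2 * a + 2)) -
        ((α + (N : ℝ) + 2 * a) / (2 * a + 2)) *
          v ((-t / (2 * a + 2)) * r ^ (2 * a + 2)) = 0) :
    ∀ r : ℝ, 0 < r →
      deriv (deriv (fun ρ : ℝ => ρ ^ α * v ((-t / (2 * a + 2)) * ρ ^ (2 * a + 2)))) r +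
        (((N : ℝ) - 1) / r + t * r ^ (2 * a + 1)) *
          deriv (fun ρ : ℝ => ρ ^ α * v ((-t / (2 * a + 2)) * ρ ^ (2 * a + 2))) r +
        (lam * r ^ (-2 : ℝ) + t * ((N : ℝ) + 2 * a) * r ^ (2 * a)) *
          (r ^ α * v ((-t / (2 * a + 2)) * r ^ (2 * a + 2))) = 0 := by
  intro r hr
  have hβ : (2 * a + 2) ≠ 0 := by intro h; apply ha; linarith
  have hv1 : Differentiable ℝ v := hv.differentiable (by norm_num)
  have hv2 : Differentiable ℝ (deriv v) := by
    have := (contDiff_succ_iff_deriv.mp (by exact_mod_cast hv : ContDiff ℝ ((1:ℕ)+1) v)).2.2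
    exact this.differentiable (by norm_num)
  set c : ℝ := -t / (2 * a + 2) with hc
  set g : ℝ → ℝ := fun ρ =>
      α * ρ ^ (α - 1) * v (c * ρ ^ (2*a+2)) +
      c * (2*a+2) * (ρ ^ (α + (2*a+2) - 1) * deriv v (c * ρ ^ (2*a+2))) with hgdef
  have hyd : ∀ ρ : ℝ, 0 < ρ →
      HasDerivAt (fun ρ : ℝ => ρ ^ α * v (c * ρ ^ (2*a+2))) (g ρ) ρ :=
    fun ρ hρ => helper c (2*a+2) α v hv1 ρ hρ
  have hg : HasDerivAt g
      (α * ((α-1) * r ^ (α-1-1) * v (c * r ^ (2*a+2)) +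
            c * (2*a+2) * (r ^ ((α-1) + (2*a+2) - 1) * deriv v (c * r ^ (2*a+2)))) +
       c * (2*a+2) *
          ((α + (2*a+2) - 1) * r ^ (α + (2*a+2) - 1 - 1) * deriv v (c * r ^ (2*a+2)) +
           c * (2*a+2) * (r ^ ((α + (2*a+2) - 1) + (2*a+2) - 1) *
              deriv (deriv v) (c * r ^ (2*a+2))))) r := by
    have h1 := (helper c (2*a+2) (α-1) v hv1 r hr).const_mul α
    have h2 := (helper c (2*a+2) (α + (2*a+2) - 1) (deriv v) hv2 r hr).const_mul (c * (2*a+2))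
    have := h1.add h2
    have hfun : g = (fun y => α * (y ^ (α - 1) * v (c * y ^ (2 * a + 2)))) + fun y =>
        c * (2 * a + 2) * (y ^ (α + (2 * a + 2) - 1) * deriv v (c * y ^ (2 * a + 2))) := by
      funext y; simp only [hgdef, Pi.add_apply]; ring
    rw [hfun]; exact this
  have heq : deriv (fun ρ : ℝ => ρ ^ α * v (c * ρ ^ (2*a+2))) =ᶠ[nhds r] g := by
    filter_upwards [isOpen_Ioi.eventually_mem hr] with ρ hρ
    exact (hyd ρ hρ).deriv
  have hd1 : deriv (fun ρ : ℝ => ρ ^ α * v (c * ρ ^ (2*a+2))) r = g r := (hyd r hr).deriv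
  have hd2 := heq.deriv_eq.trans hg.deriv
  rw [hd2, hd1, hgdef]
  have hK := hkummer r hr

  have P : ∀ x y : ℝ, r ^ (x + y) = r ^ x * r ^ y := fun x y => Real.rpow_add hr x y
  have key : ∀ x y : ℝ, x = y + 1 → r ^ x = r ^ y * r := by
    intro x y h; rw [h, P, Real.rpow_one]
  have key2 : ∀ x y : ℝ, x = y + (2*a+2) → r ^ x = r ^ y * r ^ (2*a+2) := by
    intro x y h; rw [h, P]
  have e1 : r ^ α = r ^ (α-1-1) * r * r := by
    rw [key α (α-1) (by ring), key (α-1) (α-1-1) (by ring)]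
  have e2 : r ^ (α-1) = r ^ (α-1-1) * r := key (α-1) (α-1-1) (by ring)
  have e3 : r ^ (α + (2*a+2) - 1) = r ^ (α-1-1) * r * r ^ (2*a+2) := by
    rw [key2 (α + (2*a+2) - 1) (α-1) (by ring), key (α-1) (α-1-1) (by ring)]
  have e4 : r ^ (α + (2*a+2) - 1 - 1) = r ^ (α-1-1) * r ^ (2*a+2) :=
    key2 _ (α-1-1) (by ring)
  have e5 : r ^ ((α-1) + (2*a+2) - 1) = r ^ (α-1-1) * r ^ (2*a+2) :=
    key2 _ (α-1-1) (by ring)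
  have e6 : r ^ ((α + (2*a+2) - 1) + (2*a+2) - 1) = r ^ (α-1-1) * r ^ (2*a+2) * r ^ (2*a+2) := by
    rw [key2 ((α + (2*a+2) - 1) + (2*a+2) - 1) (α + (2*a+2) - 1 - 1) (by ring),
        key2 (α + (2*a+2) - 1 - 1) (α-1-1) (by ring)]
  have e7 : r ^ (2*a+2) = r ^ (2*a+1) * r := key (2*a+2) (2*a+1) (by ring)
  have e8 : r ^ (2*a+2) = r ^ (2*a) * (r * r) := by
    rw [key (2*a+2) (2*a+1) (by ring), key (2*a+1) (2*a) (by ring)]; ring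
  have e9 : r ^ (-2:ℝ) = r⁻¹ * r⁻¹ := by
    rw [show (-2:ℝ) = (-1) + (-1) by norm_num, P, Real.rpow_neg_one]
  have e10 : r * r⁻¹ = 1 := mul_inv_cancel₀ hr.ne'
  beta_reduce
  rw [e9, div_eq_mul_inv]
  rw [e1, e2, e3, e4, e5, e6]
  set Y := r ^ (α-1-1)
  set Q := r ^ (2*a+2)
  set V := v (c * Q)
  set DV := deriv v (c * Q)
  set DDV := deriv (deriv v) (c * Q)
  set i := r⁻¹
  set p1 := r ^ (2*a+1)
  set p0 := r ^ (2*a)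
  have hcr : c * (2*a+2) = -t := by rw [hc]; exact div_mul_cancel₀ _ hβ
  have hBr : (2 * α + 2 * a + (N:ℝ)) / (2 * a + 2) * (2*a+2) = 2 * α + 2 * a + (N:ℝ) :=
    div_mul_cancel₀ _ hβ
  have hAr : (α + (N:ℝ) + 2 * a) / (2 * a + 2) * (2*a+2) = α + (N:ℝ) + 2 * a :=
    div_mul_cancel₀ _ hβ
  linear_combination ((2*a+2)^2 * c * Y * Q) * hK + (Y * V) * hα
    + (-((2*a+2) * c * Y * Q * DV)) * hBr
    + ((2*a+2) * c * Y * Q * V) * hAr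
    + (c * (2*a+2) * Y * Q * Q * DV + (α + (N:ℝ) + 2*a) * Y * Q * V) * hcr
    + (((N:ℝ)-1) * c * (2*a+2) * Y * Q * DV + ((N:ℝ)-1) * α * Y * V
        + lam * Y * V * (r * i + 1)) * e10
    + (-(t * c * (2*a+2) * Y * Q * DV) - t * α * Y * V) * e7
    + (-(t * ((N:ℝ) + 2*a) * Y * V)) * e8
example : True := trivial
end
end
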